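/- arXiv:2002.07801 — 3 statements merged into one kernel-verified Lean document; each statement's English description precedes it below -/
import Mathlib

section
/- Let A be a bounded operator on a Hilbert space such that 1 - A - A* is positive definite (i.e., bounded below by a positive multiple of the identity). Then 1 - A is invertible. -/
/-! Since `2 Re⟪(1 - A)x, x⟫ = ‖x‖² + Re⟪(1 - A - A*)x, x⟫`, the operator `1 - A` is coercive.
A coercive operator is bounded below, hence injective with closed range, and its range has
trivial orthogonal complement, so it is invertible (Lax–Milgram). -/

open ContinuousLinearMap RCLike

section Coercive

variable {𝕜 E : Type*} [RCLike 𝕜] [NormedAddCommGroup E] [InnerProductSpace 𝕜 E]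
  [CompleteSpace E]

lemma ContinuousLinearMap.re_inner_adjoint_apply_self (A : E →L[𝕜] E) (x : E) :
    re (inner 𝕜 (adjoint A x) x) = re (inner 𝕜 (A x) x) := by
  rw [adjoint_inner_left, inner_re_symm]

lemma ContinuousLinearMap.re_inner_one_sub_sub_adjoint_apply_self (A : E →L[𝕜] E) (x : E) :
    re (inner 𝕜 ((1 - A - adjoint A) x) x) = 2 * re (inner 𝕜 ((1 - A) x) x) - ‖x‖ ^ 2 := by
  simp only [sub_apply, one_apply_eq_self, inner_sub_left, map_sub, inner_self_eq_norm_sq,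
    re_inner_adjoint_apply_self]
  ring

lemma ContinuousLinearMap.isUnit_of_forall_le_re_inner (T : E →L[𝕜] E) {c : ℝ} (hc : 0 < c)
    (h : ∀ x, c * ‖x‖ ^ 2 ≤ re (inner 𝕜 (T x) x)) : IsUnit T :=
  T.isUnit_of_forall_le_norm_inner_map (c := c.toNNReal) (Real.toNNReal_pos.mpr hc) fun x => by
    rw [Real.coe_toNNReal c hc.le, mul_comm]
    exact (h x).trans (re_le_norm _)

end Coercive

open ContinuousLinearMap ComplexInnerProductSpace in
theorem stmt0 {H : Type*} [NormedAddCommGroup H] [InnerProductSpace ℂ H] [CompleteSpace H]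
    (A : H →L[ℂ] H)
    (hpos : ∃ c : ℝ, 0 < c ∧ ∀ x : H,
      c * ‖x‖ ^ 2 ≤ (inner ℂ (((1 : H →L[ℂ] H) - A - adjoint A) x) x : ℂ).re) :
    IsUnit ((1 : H →L[ℂ] H) - A) := by
  obtain ⟨c, hc, h⟩ := hpos
  refine (1 - A).isUnit_of_forall_le_re_inner (half_pos hc) fun x => ?_
  have hx := h x
  rw [← RCLike.re_eq_complex_re, re_inner_one_sub_sub_adjoint_apply_self] at hx
  have : 0 ≤ ‖x‖ ^ 2 := by positivity
  linarith
end

section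
/- Let A be a bounded operator on a Hilbert space such that 1 - A - A* is positive definite. Then A(1 - A)⁻¹ is a strict contraction, i.e., ‖A(1-A)⁻¹‖ < 1. -/
/-!
Write `B = 1 - A`. Expanding the square gives
`‖B x‖² = re ⟪(1 - A - A†) x, x⟫ + ‖A x‖² ≥ c ‖x‖² + ‖A x‖²`.
Putting `x = B⁻¹ y` and using `‖y‖ ≤ ‖B‖ ‖x‖` yields `‖A B⁻¹ y‖² ≤ (1 - c / ‖B‖²) ‖y‖²`.
That `B` is invertible at all follows from `2 re ⟪B x, x⟫ = ‖x‖² + re ⟪(1 - A - A†) x, x⟫ ≥ ‖x‖²`: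
a coercive operator on a Hilbert space is invertible.
-/

open ContinuousLinearMap RCLike

theorem ContinuousLinearMap.norm_le_sqrt_of_forall_norm_sq_le {𝕜 E F : Type*}
    [NontriviallyNormedField 𝕜] [SeminormedAddCommGroup E] [SeminormedAddCommGroup F]
    [NormedSpace 𝕜 E] [NormedSpace 𝕜 F] (f : E →L[𝕜] F) {k : ℝ}
    (h : ∀ x, ‖f x‖ ^ 2 ≤ k * ‖x‖ ^ 2) : ‖f‖ ≤ √k :=
  f.opNorm_le_bound (Real.sqrt_nonneg k) fun x ↦ by
    rw [← Real.sqrt_sq (norm_nonneg (f x)), ← Real.sqrt_sq (norm_nonneg x),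
      ← Real.sqrt_mul' k (sq_nonneg _)]
    exact Real.sqrt_le_sqrt (h x)

theorem ContinuousLinearMap.norm_mul_inverse_lt_one_of_norm_sq_add_le {𝕜 E : Type*}
    [NontriviallyNormedField 𝕜] [NormedAddCommGroup E] [NormedSpace 𝕜 E]
    {T S : E →L[𝕜] E} (hS : IsUnit S) {c : ℝ} (hc : 0 < c)
    (h : ∀ x, ‖T x‖ ^ 2 + c * ‖x‖ ^ 2 ≤ ‖S x‖ ^ 2) : ‖T * Ring.inverse S‖ < 1 := by
  rcases subsingleton_or_nontrivial E with hE | hE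
  · simp [Subsingleton.elim (T * Ring.inverse S) 0]
  have hS_sq : 0 < ‖S‖ ^ 2 := pow_pos (norm_pos_iff.mpr hS.ne_zero) 2
  set δ := c / ‖S‖ ^ 2
  have hδ : 0 < δ := div_pos hc hS_sq
  suffices hbound : ∀ y, ‖(T * Ring.inverse S) y‖ ^ 2 ≤ (1 - δ) * ‖y‖ ^ 2 from
    (norm_le_sqrt_of_forall_norm_sq_le _ hbound).trans_lt
      ((Real.sqrt_lt' one_pos).mpr (by linarith))
  intro y
  set x := Ring.inverse S y
  have hSx : S x = y := congr($(Ring.mul_inverse_cancel S hS) y)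
  have hy : ‖y‖ ^ 2 ≤ ‖S‖ ^ 2 * ‖x‖ ^ 2 := by
    rw [← mul_pow, ← hSx]
    exact pow_le_pow_left₀ (norm_nonneg _) (S.le_opNorm x) 2
  have hδy : δ * ‖y‖ ^ 2 ≤ c * ‖x‖ ^ 2 := by
    rw [div_mul_eq_mul_div, div_le_iff₀ hS_sq]
    nlinarith
  have hx := h x
  rw [hSx] at hx
  rw [mul_apply_eq_comp]
  linarith

section InnerProductSpace

variable {𝕜 H : Type*} [RCLike 𝕜] [NormedAddCommGroup H] [InnerProductSpace 𝕜 H]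
  [CompleteSpace H] (A : H →L[𝕜] H)

theorem ContinuousLinearMap.re_inner_one_sub_sub_adjoint_apply (x : H) :
    re (inner 𝕜 ((1 - A - adjoint A) x) x) = ‖x‖ ^ 2 - 2 * re (inner 𝕜 (A x) x) := by
  simp only [sub_apply, one_apply_eq_self, inner_sub_left, map_sub, adjoint_inner_left,
    inner_self_eq_norm_sq, inner_re_symm x (A x)]
  ring

theorem ContinuousLinearMap.norm_one_sub_apply_sq (x : H) :
    ‖(1 - A) x‖ ^ 2 = re (inner 𝕜 ((1 - A - adjoint A) x) x) + ‖A x‖ ^ 2 := by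
  rw [re_inner_one_sub_sub_adjoint_apply, sub_apply, one_apply_eq_self, norm_sub_sq (𝕜 := 𝕜),
    inner_re_symm x (A x)]

theorem ContinuousLinearMap.isUnit_one_sub_of_forall_re_inner_nonneg
    (h : ∀ x, 0 ≤ re (inner 𝕜 ((1 - A - adjoint A) x) x)) : IsUnit (1 - A) := by
  refine isUnit_of_forall_le_norm_inner_map (1 - A) (c := 1 / 2) (by norm_num) fun x ↦ ?_
  have hre : re (inner 𝕜 ((1 - A) x) x) = ‖x‖ ^ 2 - re (inner 𝕜 (A x) x) := by
    rw [sub_apply, one_apply_eq_self, inner_sub_left, map_sub, inner_self_eq_norm_sq]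
  have hx := re_inner_one_sub_sub_adjoint_apply A x ▸ h x
  calc ‖x‖ ^ 2 * ((1 / 2 : NNReal) : ℝ) ≤ re (inner 𝕜 ((1 - A) x) x) := by
        rw [hre]; norm_num; linarith
    _ ≤ ‖inner 𝕜 ((1 - A) x) x‖ := re_le_norm _

end InnerProductSpace

open ContinuousLinearMap in
theorem stmt1 {H : Type*} [NormedAddCommGroup H] [InnerProductSpace ℂ H] [CompleteSpace H]
    (A : H →L[ℂ] H)
    (hpos : ∃ c : ℝ, 0 < c ∧ ∀ x : H,
      c * ‖x‖ ^ 2 ≤ (inner ℂ (((1 : H →L[ℂ] H) - A - adjoint A) x) x : ℂ).re) :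
    ‖A * Ring.inverse ((1 : H →L[ℂ] H) - A)‖ < 1 := by
  obtain ⟨c, hc, hpos⟩ := hpos
  simp only [← RCLike.re_to_complex] at hpos
  have hunit : IsUnit (1 - A) := isUnit_one_sub_of_forall_re_inner_nonneg A fun x ↦
    (by positivity : 0 ≤ c * ‖x‖ ^ 2).trans (hpos x)
  refine norm_mul_inverse_lt_one_of_norm_sq_add_le hunit hc fun x ↦ ?_
  rw [norm_one_sub_apply_sq]
  linarith [hpos x]
end

section
/- If A is a 2×2 complex matrix with exp(A) = M where M is not diagonalizable and the unique eigenvalue of M is -1, then trace(A) ≠ 0. -/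
/-!
Suppose `trace A = 0` and put `δ = -det A`. By Cayley–Hamilton `A ^ 2 = δ • 1`, so the exponential
series splits into its even and odd parts, `exp A = c₀ • 1 + c₁ • A` with `c₀ = cosh √δ` and
`c₁ = sinh √δ / √δ`. Reading trace and determinant off the characteristic polynomial `(X + 1) ^ 2`
of `M = exp A` gives `2 c₀ = -2` and `c₀ ^ 2 - c₁ ^ 2 δ = 1`, i.e. `c₀ = -1` and `c₁ ^ 2 det A = 0`.
If `c₁ = 0` then `M` is scalar, hence diagonalizable; if `det A = 0` then `c₀ = cosh 0 = 1`.
-/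

open Polynomial Matrix

/-- A square complex matrix is diagonalizable if it is similar to a diagonal matrix. -/
def Matrix.IsDiagonalizable {n : Type*} [Fintype n] [DecidableEq n]
    (M : Matrix n n ℂ) : Prop :=
  ∃ P : Matrix n n ℂ, IsUnit P ∧ (P⁻¹ * M * P).IsDiag

open scoped Nat

lemma summable_inv_factorial_mul_pow_of_le (δ : ℂ) {m : ℕ → ℕ} (hm : ∀ k, k ≤ m k) :
    Summable fun k ↦ ((m k)! : ℂ)⁻¹ * δ ^ k := by
  refine .of_norm_bounded (Real.summable_pow_div_factorial ‖δ‖) fun k ↦ ?_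
  rw [norm_mul, norm_inv, norm_pow, Complex.norm_natCast, inv_mul_eq_div]
  gcongr
  exact hm k

/- `expEvenCoeff δ = cosh √δ` and `expOddCoeff δ = sinh √δ / √δ`, written as power series in `δ`
so that no square root has to be chosen. -/
noncomputable def expEvenCoeff (δ : ℂ) : ℂ := ∑' k : ℕ, ((2 * k)! : ℂ)⁻¹ * δ ^ k

noncomputable def expOddCoeff (δ : ℂ) : ℂ := ∑' k : ℕ, ((2 * k + 1)! : ℂ)⁻¹ * δ ^ k

lemma expEvenCoeff_zero : expEvenCoeff 0 = 1 := by
  rw [expEvenCoeff, tsum_eq_single 0 fun k hk ↦ by simp [zero_pow hk]]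
  simp

theorem NormedSpace.exp_eq_of_sq_eq_smul_one {𝔸 : Type*} [Ring 𝔸] [Algebra ℂ 𝔸]
    [TopologicalSpace 𝔸] [IsTopologicalRing 𝔸] [ContinuousSMul ℂ 𝔸] [T2Space 𝔸]
    {a : 𝔸} {δ : ℂ} (ha : a ^ 2 = δ • 1) :
    exp a = expEvenCoeff δ • 1 + expOddCoeff δ • a := by
  have hEven : HasSum (fun k ↦ ((2 * k)! : ℂ)⁻¹ • a ^ (2 * k)) (expEvenCoeff δ • 1) := by
    simp_rw [pow_mul, ha, _root_.smul_pow, one_pow, smul_smul]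
    exact (summable_inv_factorial_mul_pow_of_le δ fun k ↦ by omega).hasSum.smul_const _
  have hOdd : HasSum (fun k ↦ ((2 * k + 1)! : ℂ)⁻¹ • a ^ (2 * k + 1)) (expOddCoeff δ • a) := by
    simp_rw [pow_succ, pow_mul, ha, _root_.smul_pow, one_pow, smul_one_mul, smul_smul]
    exact (summable_inv_factorial_mul_pow_of_le δ fun k ↦ by omega).hasSum.smul_const _
  rw [exp_eq_tsum ℂ]
  exact (HasSum.even_add_odd (f := fun n ↦ (n ! : ℂ)⁻¹ • a ^ n) hEven hOdd).tsum_eq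

namespace Matrix

variable {R : Type*} [CommRing R]

theorem sq_eq_neg_det_smul_one_of_trace_eq_zero [Nontrivial R] {A : Matrix (Fin 2) (Fin 2) R}
    (hA : A.trace = 0) : A ^ 2 = -A.det • 1 := by
  have h := aeval_self_charpoly A
  rw [charpoly_fin_two, hA] at h
  simp only [map_zero, zero_mul, sub_zero, map_add, map_pow, aeval_X, aeval_C,
    Algebra.algebraMap_eq_smul_one] at h
  linear_combination (norm := module) h

theorem trace_eq_and_det_eq_of_charpoly_eq_sq [Nontrivial R] {A : Matrix (Fin 2) (Fin 2) R}
    {μ : R} (h : A.charpoly = (X - C μ) ^ 2) : A.trace = 2 * μ ∧ A.det = μ ^ 2 := by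
  have hsq : (X - C μ) ^ 2 = X ^ 2 - C (2 * μ) * X + C (μ ^ 2) := by
    simp only [map_mul, map_pow, map_ofNat]
    ring
  rw [charpoly_fin_two, hsq] at h
  have h1 := congrArg (coeff · 1) h
  have h0 := congrArg (coeff · 0) h
  exact ⟨by simpa [coeff_X, coeff_C, -map_pow] using h1,
    by simpa [coeff_X, coeff_C, -map_pow] using h0⟩

theorem det_fin_two_smul_one_add_smul (a b : R) (A : Matrix (Fin 2) (Fin 2) R) :
    (a • 1 + b • A).det = a ^ 2 + a * b * A.trace + b ^ 2 * A.det := by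
  simp only [det_fin_two, trace_fin_two, Matrix.add_apply, Matrix.smul_apply, smul_eq_mul,
    one_apply_eq, one_apply_ne zero_ne_one, one_apply_ne one_ne_zero]
  ring

theorem trace_smul_one_add_smul (a b : R) (A : Matrix (Fin 2) (Fin 2) R) :
    (a • 1 + b • A).trace = 2 * a + b * A.trace := by
  simp only [trace_add, trace_smul, trace_one, Fintype.card_fin, smul_eq_mul]
  push_cast
  ring

theorem isDiagonalizable_smul_one {n : Type*} [Fintype n] [DecidableEq n] (c : ℂ) :
    (c • 1 : Matrix n n ℂ).IsDiagonalizable :=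
  ⟨1, isUnit_one, by simp [(isDiag_one (n := n)).smul c]⟩

end Matrix

theorem stmt11 (A M : Matrix (Fin 2) (Fin 2) ℂ)
    (hexp : NormedSpace.exp A = M)
    (hM : ¬ M.IsDiagonalizable)
    (heig : M.charpoly = (X - C (-1)) ^ 2) :
    Matrix.trace A ≠ 0 := by
  intro htr
  have hMA : M = expEvenCoeff (-A.det) • 1 + expOddCoeff (-A.det) • A :=
    hexp ▸ NormedSpace.exp_eq_of_sq_eq_smul_one (sq_eq_neg_det_smul_one_of_trace_eq_zero htr)
  obtain ⟨htrM, hdetM⟩ := trace_eq_and_det_eq_of_charpoly_eq_sq heig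
  rw [hMA, trace_smul_one_add_smul, htr] at htrM
  rw [hMA, det_fin_two_smul_one_add_smul, htr] at hdetM
  have hEven : expEvenCoeff (-A.det) = -1 := by linear_combination htrM / 2
  have hOddDet : expOddCoeff (-A.det) ^ 2 * A.det = 0 := by
    linear_combination hdetM - (expEvenCoeff (-A.det) - 1) * hEven
  rcases mul_eq_zero.mp hOddDet with hOdd | hdet
  · rw [pow_eq_zero_iff two_ne_zero] at hOdd
    exact hM (by simpa [hMA, hOdd] using isDiagonalizable_smul_one (expEvenCoeff (-A.det)))
  · rw [hdet, neg_zero, expEvenCoeff_zero] at hEven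
    norm_num at hEven
end
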